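/- Let u and v be MAC vector fields on Omega=(0,L)^3, both satisfying the no-penetration and free-slip boundary conditions. Then the face-centered discrete Laplacian is symmetric and negative semidefinite with respect to the MAC inner product: (-Delta_h u, v) = (u, -Delta_h v), and (-Delta_h u, u) >= 0. -/

import Mathlib

open Finset

noncomputable section

/-! Finite–difference / MAC-grid framework on Ω = (0,L)³ with N cells per
direction and mesh size h = L/N.  A cell-centered grid function is a map
`ℤ → ℤ → ℤ → ℝ` whose meaningful values are at indices in {1,…,N}³; ghost
values are given by the discrete homogeneous Neumann (reflection) condition,
implemented by clamping indices to {1,…,N}.  The x-component of a MAC vector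
field is recorded so that `ux i j k` is the value at the x-face (i+1/2,j,k),
0 ≤ i ≤ N, 1 ≤ j,k ≤ N (analogously for the y,z components), and the
free-slip condition prescribes the tangential ghost values by reflection,
again implemented by clamping the tangential indices. -/

/-- Index clamped into `{1,…,N}`: implements the reflection ghost values. -/
def clampIdx (N : ℕ) (i : ℤ) : ℤ := max 1 (min i (N : ℤ))

/-- Extension of a cell-centered grid function by the discrete homogeneous
Neumann (reflection) ghost values. -/
def nExt (N : ℕ) (φ : ℤ → ℤ → ℤ → ℝ) (i j k : ℤ) : ℝ :=
  φ (clampIdx N i) (clampIdx N j) (clampIdx N k)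

/-- The cell indices `{1,…,N}`. -/
def cellIdx (N : ℕ) : Finset ℤ := Finset.Icc 1 (N : ℤ)

/-- The interior-face indices `{1,…,N-1}`. -/
def faceIdx (N : ℕ) : Finset ℤ := Finset.Icc 1 ((N : ℤ) - 1)

/-- Cell-centered discrete inner product `(φ,ψ) = h³ Σ φψ`. -/
def cip (N : ℕ) (h : ℝ) (φ ψ : ℤ → ℤ → ℤ → ℝ) : ℝ :=
  h ^ 3 * ∑ i ∈ cellIdx N, ∑ j ∈ cellIdx N, ∑ k ∈ cellIdx N, φ i j k * ψ i j k

/-- Zero discrete mean: `Σ_{i,j,k=1}^N φ_{ijk} = 0`. -/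
def zeroMean (N : ℕ) (φ : ℤ → ℤ → ℤ → ℝ) : Prop :=
  ∑ i ∈ cellIdx N, ∑ j ∈ cellIdx N, ∑ k ∈ cellIdx N, φ i j k = 0

/-- Two cell-centered functions agree on all cells. -/
def CellEqOn (N : ℕ) (φ ψ : ℤ → ℤ → ℤ → ℝ) : Prop :=
  ∀ i ∈ cellIdx N, ∀ j ∈ cellIdx N, ∀ k ∈ cellIdx N, φ i j k = ψ i j k

/-- Discrete maximum norm over the cells. -/
def cInf (N : ℕ) (φ : ℤ → ℤ → ℤ → ℝ) : ℝ :=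
  sSup {r : ℝ | ∃ i ∈ cellIdx N, ∃ j ∈ cellIdx N, ∃ k ∈ cellIdx N, r = |φ i j k|}

/-- `D_x φ` at the x-face `(i+1/2,j,k)` (recorded at index `(i,j,k)`);
it vanishes at the boundary faces `i = 0, N` by the Neumann ghost values. -/
def Dx (N : ℕ) (h : ℝ) (φ : ℤ → ℤ → ℤ → ℝ) (i j k : ℤ) : ℝ :=
  (nExt N φ (i + 1) j k - nExt N φ i j k) / h

/-- `D_y φ` at the y-face `(i,j+1/2,k)`. -/
def Dy (N : ℕ) (h : ℝ) (φ : ℤ → ℤ → ℤ → ℝ) (i j k : ℤ) : ℝ :=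
  (nExt N φ i (j + 1) k - nExt N φ i j k) / h

/-- `D_z φ` at the z-face `(i,j,k+1/2)`. -/
def Dz (N : ℕ) (h : ℝ) (φ : ℤ → ℤ → ℤ → ℝ) (i j k : ℤ) : ℝ :=
  (nExt N φ i j (k + 1) - nExt N φ i j k) / h

/-- Cell-centered discrete Laplacian, using the Neumann ghost values. -/
def lapC (N : ℕ) (h : ℝ) (φ : ℤ → ℤ → ℤ → ℝ) (i j k : ℤ) : ℝ :=
  (nExt N φ (i + 1) j k + nExt N φ (i - 1) j k + nExt N φ i (j + 1) k +
      nExt N φ i (j - 1) k + nExt N φ i j (k + 1) + nExt N φ i j (k - 1) -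
      6 * nExt N φ i j k) / h ^ 2

/-- `‖∇_h φ‖₂²`: sum of squared differences over all interior faces. -/
def gradSq (N : ℕ) (h : ℝ) (φ : ℤ → ℤ → ℤ → ℝ) : ℝ :=
  h ^ 3 *
    ((∑ i ∈ faceIdx N, ∑ j ∈ cellIdx N, ∑ k ∈ cellIdx N, Dx N h φ i j k ^ 2) +
      (∑ i ∈ cellIdx N, ∑ j ∈ faceIdx N, ∑ k ∈ cellIdx N, Dy N h φ i j k ^ 2) +
      (∑ i ∈ cellIdx N, ∑ j ∈ cellIdx N, ∑ k ∈ faceIdx N, Dz N h φ i j k ^ 2))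

/-- Face inner product `[f,g]_x`. -/
def ipFX (N : ℕ) (h : ℝ) (f g : ℤ → ℤ → ℤ → ℝ) : ℝ :=
  h ^ 3 / 2 * ∑ i ∈ cellIdx N, ∑ j ∈ cellIdx N, ∑ k ∈ cellIdx N,
    (f i j k * g i j k + f (i - 1) j k * g (i - 1) j k)

/-- Face inner product `[f,g]_y`. -/
def ipFY (N : ℕ) (h : ℝ) (f g : ℤ → ℤ → ℤ → ℝ) : ℝ :=
  h ^ 3 / 2 * ∑ i ∈ cellIdx N, ∑ j ∈ cellIdx N, ∑ k ∈ cellIdx N,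
    (f i j k * g i j k + f i (j - 1) k * g i (j - 1) k)

/-- Face inner product `[f,g]_z`. -/
def ipFZ (N : ℕ) (h : ℝ) (f g : ℤ → ℤ → ℤ → ℝ) : ℝ :=
  h ^ 3 / 2 * ∑ i ∈ cellIdx N, ∑ j ∈ cellIdx N, ∑ k ∈ cellIdx N,
    (f i j k * g i j k + f i j (k - 1) * g i j (k - 1))

/-- MAC inner product of two vector fields. -/
def macIP (N : ℕ) (h : ℝ) (ux uy uz vx vy vz : ℤ → ℤ → ℤ → ℝ) : ℝ :=
  ipFX N h ux vx + ipFY N h uy vy + ipFZ N h uz vz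

/-- Discrete divergence at the cell `(i,j,k)`. -/
def divH (h : ℝ) (ux uy uz : ℤ → ℤ → ℤ → ℝ) (i j k : ℤ) : ℝ :=
  (ux i j k - ux (i - 1) j k + uy i j k - uy i (j - 1) k +
    uz i j k - uz i j (k - 1)) / h

/-- No-penetration boundary condition: the normal boundary face values vanish. -/
def NoPen (N : ℕ) (ux uy uz : ℤ → ℤ → ℤ → ℝ) : Prop :=
  (∀ j ∈ cellIdx N, ∀ k ∈ cellIdx N, ux 0 j k = 0 ∧ ux (N : ℤ) j k = 0) ∧
  (∀ i ∈ cellIdx N, ∀ k ∈ cellIdx N, uy i 0 k = 0 ∧ uy i (N : ℤ) k = 0) ∧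
  (∀ i ∈ cellIdx N, ∀ j ∈ cellIdx N, uz i j 0 = 0 ∧ uz i j (N : ℤ) = 0)

/-- Free-slip (reflection) extension of the x-face component in the
tangential directions. -/
def fExtX (N : ℕ) (f : ℤ → ℤ → ℤ → ℝ) (i j k : ℤ) : ℝ :=
  f i (clampIdx N j) (clampIdx N k)

/-- Free-slip extension of the y-face component. -/
def fExtY (N : ℕ) (f : ℤ → ℤ → ℤ → ℝ) (i j k : ℤ) : ℝ :=
  f (clampIdx N i) j (clampIdx N k)

/-- Free-slip extension of the z-face component. -/
def fExtZ (N : ℕ) (f : ℤ → ℤ → ℤ → ℝ) (i j k : ℤ) : ℝ :=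
  f (clampIdx N i) (clampIdx N j) k

/-- Face-centered discrete Laplacian of the x-component (seven-point stencil,
free-slip ghost values in the tangential directions). -/
def lapFX (N : ℕ) (h : ℝ) (f : ℤ → ℤ → ℤ → ℝ) (i j k : ℤ) : ℝ :=
  (fExtX N f (i + 1) j k + fExtX N f (i - 1) j k + fExtX N f i (j + 1) k +
      fExtX N f i (j - 1) k + fExtX N f i j (k + 1) + fExtX N f i j (k - 1) -
      6 * fExtX N f i j k) / h ^ 2

/-- Face-centered discrete Laplacian of the y-component. -/
def lapFY (N : ℕ) (h : ℝ) (f : ℤ → ℤ → ℤ → ℝ) (i j k : ℤ) : ℝ :=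
  (fExtY N f (i + 1) j k + fExtY N f (i - 1) j k + fExtY N f i (j + 1) k +
      fExtY N f i (j - 1) k + fExtY N f i j (k + 1) + fExtY N f i j (k - 1) -
      6 * fExtY N f i j k) / h ^ 2

/-- Face-centered discrete Laplacian of the z-component. -/
def lapFZ (N : ℕ) (h : ℝ) (f : ℤ → ℤ → ℤ → ℝ) (i j k : ℤ) : ℝ :=
  (fExtZ N f (i + 1) j k + fExtZ N f (i - 1) j k + fExtZ N f i (j + 1) k +
      fExtZ N f i (j - 1) k + fExtZ N f i j (k + 1) + fExtZ N f i j (k - 1) -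
      6 * fExtZ N f i j k) / h ^ 2

/-- Face average `A_x φ` at the x-face `(i+1/2,j,k)`. -/
def AxF (N : ℕ) (φ : ℤ → ℤ → ℤ → ℝ) (i j k : ℤ) : ℝ :=
  (nExt N φ (i + 1) j k + nExt N φ i j k) / 2

/-- Face average `A_y φ`. -/
def AyF (N : ℕ) (φ : ℤ → ℤ → ℤ → ℝ) (i j k : ℤ) : ℝ :=
  (nExt N φ i (j + 1) k + nExt N φ i j k) / 2

/-- Face average `A_z φ`. -/
def AzF (N : ℕ) (φ : ℤ → ℤ → ℤ → ℝ) (i j k : ℤ) : ℝ :=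
  (nExt N φ i j (k + 1) + nExt N φ i j k) / 2

/-! After permuting indices, the y- and z-components of a MAC field become x-face fields, so it
suffices to treat `[-Δ_h u, v]_x`. The no-penetration values make the two boundary faces drop out
of `[·,·]_x`, leaving `h³ Σ` over interior faces. Summation by parts then moves one difference
onto `v` in each direction: in the normal direction the boundary terms vanish because `v` does at
the walls, in the tangential directions because the free-slip reflection makes the boundary
differences of `u` vanish. What remains is `h Σ δu δv` over all differences, symmetric in `u`, `v`
and nonnegative for `u = v`. -/

section SummationByParts

theorem sum_Ico_sub_telescope {M : Type*} [AddCommGroup M] (φ : ℤ → M) {a b : ℤ} (hab : a ≤ b) :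
    ∑ i ∈ Ico a b, (φ (i + 1) - φ i) = φ b - φ a := by
  induction b, hab using Int.leInduction with
  | base => simp
  | succ b hab ih =>
    rw [← insert_Ico_right_eq_Ico_add_one hab, sum_insert right_notMem_Ico, ih]
    abel

theorem sum_Icc_comp_sub_one {M : Type*} [AddCommMonoid M] (p : ℤ → M) (a b : ℤ) :
    ∑ i ∈ Icc a b, p (i - 1) = ∑ i ∈ Icc (a - 1) (b - 1), p i :=
  sum_nbij' (· - 1) (· + 1) (fun i hi => by simp only [mem_Icc] at hi ⊢; omega)
    (fun i hi => by simp only [mem_Icc] at hi ⊢; omega)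
    (fun i _ => by simp) (fun i _ => by simp) (fun i _ => rfl)

variable {R : Type*} [CommRing R]

theorem sum_Icc_by_parts_second_diff (f g : ℤ → R) {a b : ℤ} (hab : a ≤ b + 1) :
    ∑ i ∈ Icc a b, (f (i + 1) + f (i - 1) - 2 * f i) * g i =
      (f (b + 1) - f b) * g (b + 1) - (f a - f (a - 1)) * g a -
        ∑ i ∈ Icc a b, (f (i + 1) - f i) * (g (i + 1) - g i) := by
  have telescope := sum_Ico_sub_telescope (fun i => (f i - f (i - 1)) * g i) hab
  simp only [Ico_add_one_right_eq_Icc, add_sub_cancel_right] at telescope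
  rw [← telescope, eq_sub_iff_add_eq, ← sum_add_distrib]
  exact sum_congr rfl fun i _ => by ring

theorem sum_second_diff_mul_dirichlet (N : ℕ) (f g : ℤ → R) (hg₀ : g 0 = 0) (hg_N : g N = 0) :
    ∑ i ∈ faceIdx N, (f (i + 1) + f (i - 1) - 2 * f i) * g i =
      -∑ i ∈ Icc 0 ((N : ℤ) - 1), (f (i + 1) - f i) * (g (i + 1) - g i) := by
  have extend : ∑ i ∈ faceIdx N, (f (i + 1) + f (i - 1) - 2 * f i) * g i =
      ∑ i ∈ Icc 0 ((N : ℤ) - 1), (f (i + 1) + f (i - 1) - 2 * f i) * g i := by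
    refine sum_subset (Icc_subset_Icc_left zero_le_one) fun i hi hi' => ?_
    obtain rfl : i = 0 := by simp only [faceIdx, mem_Icc] at hi hi'; omega
    rw [hg₀, mul_zero]
  rw [extend, sum_Icc_by_parts_second_diff f g (by omega), sub_add_cancel, hg_N, zero_sub, hg₀]
  ring

theorem clampIdx_of_mem {N : ℕ} {j : ℤ} (hj : j ∈ cellIdx N) : clampIdx N j = j := by
  simp only [cellIdx, mem_Icc] at hj
  simp only [clampIdx]
  omega

theorem sum_second_diff_mul_neumann (N : ℕ) (f g : ℤ → R) :
    ∑ j ∈ cellIdx N, (f (clampIdx N (j + 1)) + f (clampIdx N (j - 1)) - 2 * f j) * g j =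
      -∑ j ∈ faceIdx N, (f (j + 1) - f j) * (g (j + 1) - g j) := by
  set F : ℤ → R := fun j => f (clampIdx N j)
  have hF_top : F (N + 1) - F N = 0 := by
    simp only [F, clampIdx]
    rw [min_eq_right (by omega), min_self, sub_self]
  have hF_bot : F 1 - F (1 - 1) = 0 := by
    simp only [F, clampIdx]
    rw [max_eq_left (by omega), max_eq_left (by omega), sub_self]
  have restrict : ∑ j ∈ cellIdx N, (F (j + 1) - F j) * (g (j + 1) - g j) =
      ∑ j ∈ faceIdx N, (f (j + 1) - f j) * (g (j + 1) - g j) := by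
    rw [← sum_subset (s₁ := faceIdx N) (s₂ := cellIdx N) (Icc_subset_Icc_right (by omega))]
    · refine sum_congr rfl fun j hj => ?_
      simp only [faceIdx, mem_Icc] at hj
      simp only [F, clampIdx_of_mem (mem_Icc.2 (by omega : 1 ≤ j + 1 ∧ j + 1 ≤ N)),
        clampIdx_of_mem (mem_Icc.2 (by omega : 1 ≤ j ∧ j ≤ N))]
    · intro j hj hj'
      obtain rfl : j = N := by simp only [cellIdx, faceIdx, mem_Icc] at hj hj'; omega
      rw [hF_top, zero_mul]
  calc ∑ j ∈ cellIdx N, (f (clampIdx N (j + 1)) + f (clampIdx N (j - 1)) - 2 * f j) * g j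
      = ∑ j ∈ cellIdx N, (F (j + 1) + F (j - 1) - 2 * F j) * g j :=
        sum_congr rfl fun j hj => by simp only [F, clampIdx_of_mem hj]
    _ = -∑ j ∈ cellIdx N, (F (j + 1) - F j) * (g (j + 1) - g j) := by
        rw [cellIdx, sum_Icc_by_parts_second_diff F g (by omega), hF_top, hF_bot]
        ring
    _ = _ := by rw [restrict]

end SummationByParts

def faceDirichletFormX (N : ℕ) (u v : ℤ → ℤ → ℤ → ℝ) : ℝ :=
  (∑ i ∈ Icc 0 ((N : ℤ) - 1), ∑ j ∈ cellIdx N, ∑ k ∈ cellIdx N,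
      (u (i + 1) j k - u i j k) * (v (i + 1) j k - v i j k)) +
    (∑ i ∈ faceIdx N, ∑ j ∈ faceIdx N, ∑ k ∈ cellIdx N,
      (u i (j + 1) k - u i j k) * (v i (j + 1) k - v i j k)) +
    (∑ i ∈ faceIdx N, ∑ j ∈ cellIdx N, ∑ k ∈ faceIdx N,
      (u i j (k + 1) - u i j k) * (v i j (k + 1) - v i j k))

section FaceField

variable {N : ℕ} {h : ℝ}

theorem ipFX_eq_sum_faceIdx (f g : ℤ → ℤ → ℤ → ℝ)
    (hg : ∀ j ∈ cellIdx N, ∀ k ∈ cellIdx N, g 0 j k = 0 ∧ g N j k = 0) :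
    ipFX N h f g =
      h ^ 3 * ∑ i ∈ faceIdx N, ∑ j ∈ cellIdx N, ∑ k ∈ cellIdx N, f i j k * g i j k := by
  rw [ipFX]
  simp only [sum_add_distrib]
  set P : ℤ → ℝ := fun i => ∑ j ∈ cellIdx N, ∑ k ∈ cellIdx N, f i j k * g i j k
  have hP₀ : P 0 = 0 :=
    sum_eq_zero fun j hj => sum_eq_zero fun k hk => by rw [(hg j hj k hk).1, mul_zero]
  have hP_N : P N = 0 :=
    sum_eq_zero fun j hj => sum_eq_zero fun k hk => by rw [(hg j hj k hk).2, mul_zero]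
  have upper : ∑ i ∈ cellIdx N, P i = ∑ i ∈ faceIdx N, P i := by
    refine (sum_subset (Icc_subset_Icc_right (by omega)) fun i hi hi' => ?_).symm
    obtain rfl : i = N := by simp only [mem_Icc] at hi hi'; omega
    exact hP_N
  have lower : ∑ i ∈ cellIdx N, P (i - 1) = ∑ i ∈ faceIdx N, P i := by
    rw [cellIdx, sum_Icc_comp_sub_one, sub_self]
    refine (sum_subset (Icc_subset_Icc_left zero_le_one) fun i hi hi' => ?_).symm
    obtain rfl : i = 0 := by simp only [mem_Icc] at hi hi'; omega
    exact hP₀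
  rw [upper, lower]
  ring

theorem faceDirichletFormX_comm (u v : ℤ → ℤ → ℤ → ℝ) :
    faceDirichletFormX N u v = faceDirichletFormX N v u := by
  simp only [faceDirichletFormX, mul_comm (u _ _ _ - u _ _ _)]

theorem faceDirichletFormX_self_nonneg (u : ℤ → ℤ → ℤ → ℝ) : 0 ≤ faceDirichletFormX N u u := by
  simp only [faceDirichletFormX, ← sq]
  positivity

theorem sum_neg_lapFX_mul (u v : ℤ → ℤ → ℤ → ℝ)
    (hv : ∀ j ∈ cellIdx N, ∀ k ∈ cellIdx N, v 0 j k = 0 ∧ v N j k = 0) :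
    ∑ i ∈ faceIdx N, ∑ j ∈ cellIdx N, ∑ k ∈ cellIdx N, -lapFX N h u i j k * v i j k =
      (h ^ 2)⁻¹ * faceDirichletFormX N u v := by
  have expand : ∀ i ∈ faceIdx N, ∀ j ∈ cellIdx N, ∀ k ∈ cellIdx N,
      -lapFX N h u i j k * v i j k = -(h ^ 2)⁻¹ *
        ((u (i + 1) j k + u (i - 1) j k - 2 * u i j k) * v i j k +
          (u i (clampIdx N (j + 1)) k + u i (clampIdx N (j - 1)) k - 2 * u i j k) * v i j k +
          (u i j (clampIdx N (k + 1)) + u i j (clampIdx N (k - 1)) - 2 * u i j k) * v i j k) :=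
    fun i _ j hj k hk => by
      simp only [lapFX, fExtX, clampIdx_of_mem hj, clampIdx_of_mem hk]
      ring
  have normal : ∑ i ∈ faceIdx N, ∑ j ∈ cellIdx N, ∑ k ∈ cellIdx N,
      (u (i + 1) j k + u (i - 1) j k - 2 * u i j k) * v i j k =
        -∑ i ∈ Icc 0 ((N : ℤ) - 1), ∑ j ∈ cellIdx N, ∑ k ∈ cellIdx N,
          (u (i + 1) j k - u i j k) * (v (i + 1) j k - v i j k) := by
    rw [← sum_comm_cycle (u := faceIdx N), ← sum_comm_cycle (u := Icc 0 _), ← sum_neg_distrib]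
    refine sum_congr rfl fun j hj => ?_
    rw [← sum_neg_distrib]
    exact sum_congr rfl fun k hk => sum_second_diff_mul_dirichlet N (u · j k) (v · j k)
      (hv j hj k hk).1 (hv j hj k hk).2
  have tangential_y : ∑ i ∈ faceIdx N, ∑ j ∈ cellIdx N, ∑ k ∈ cellIdx N,
      (u i (clampIdx N (j + 1)) k + u i (clampIdx N (j - 1)) k - 2 * u i j k) * v i j k =
        -∑ i ∈ faceIdx N, ∑ j ∈ faceIdx N, ∑ k ∈ cellIdx N,
          (u i (j + 1) k - u i j k) * (v i (j + 1) k - v i j k) := by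
    rw [← sum_neg_distrib]
    refine sum_congr rfl fun i _ => ?_
    rw [sum_comm, sum_comm (s := faceIdx N), ← sum_neg_distrib]
    exact sum_congr rfl fun k _ => sum_second_diff_mul_neumann N (u i · k) (v i · k)
  have tangential_z : ∑ i ∈ faceIdx N, ∑ j ∈ cellIdx N, ∑ k ∈ cellIdx N,
      (u i j (clampIdx N (k + 1)) + u i j (clampIdx N (k - 1)) - 2 * u i j k) * v i j k =
        -∑ i ∈ faceIdx N, ∑ j ∈ cellIdx N, ∑ k ∈ faceIdx N,
          (u i j (k + 1) - u i j k) * (v i j (k + 1) - v i j k) := by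
    rw [← sum_neg_distrib]
    refine sum_congr rfl fun i _ => ?_
    rw [← sum_neg_distrib]
    exact sum_congr rfl fun j _ => sum_second_diff_mul_neumann N (u i j ·) (v i j ·)
  rw [sum_congr rfl fun i hi => sum_congr rfl fun j hj => sum_congr rfl fun k hk =>
    expand i hi j hj k hk]
  simp only [← mul_sum, sum_add_distrib]
  rw [normal, tangential_y, tangential_z, faceDirichletFormX]
  ring

theorem ipFX_neg_lapFX (u v : ℤ → ℤ → ℤ → ℝ)
    (hv : ∀ j ∈ cellIdx N, ∀ k ∈ cellIdx N, v 0 j k = 0 ∧ v N j k = 0) :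
    ipFX N h (fun a b c => -lapFX N h u a b c) v = h ^ 3 / h ^ 2 * faceDirichletFormX N u v := by
  rw [ipFX_eq_sum_faceIdx _ v hv, sum_neg_lapFX_mul u v hv]
  ring

end FaceField

def yFaceToX (f : ℤ → ℤ → ℤ → ℝ) : ℤ → ℤ → ℤ → ℝ := fun i j k => f j i k

def zFaceToX (f : ℤ → ℤ → ℤ → ℝ) : ℤ → ℤ → ℤ → ℝ := fun i j k => f j k i

section Components

variable {N : ℕ} {h : ℝ}

theorem ipFY_eq_ipFX (f g : ℤ → ℤ → ℤ → ℝ) :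
    ipFY N h f g = ipFX N h (yFaceToX f) (yFaceToX g) := by
  rw [ipFY, ipFX, sum_comm]
  rfl

theorem ipFZ_eq_ipFX (f g : ℤ → ℤ → ℤ → ℝ) :
    ipFZ N h f g = ipFX N h (zFaceToX f) (zFaceToX g) := by
  rw [ipFZ, ipFX, sum_comm_cycle]
  rfl

theorem yFaceToX_neg_lapFY (f : ℤ → ℤ → ℤ → ℝ) :
    yFaceToX (fun a b c => -lapFY N h f a b c) = fun a b c => -lapFX N h (yFaceToX f) a b c := by
  funext a b c
  simp only [yFaceToX, lapFY, lapFX, fExtY, fExtX]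
  ring

theorem zFaceToX_neg_lapFZ (f : ℤ → ℤ → ℤ → ℝ) :
    zFaceToX (fun a b c => -lapFZ N h f a b c) = fun a b c => -lapFX N h (zFaceToX f) a b c := by
  funext a b c
  simp only [zFaceToX, lapFZ, lapFX, fExtZ, fExtX]
  ring

theorem ipFY_neg_lapFY (u v : ℤ → ℤ → ℤ → ℝ)
    (hv : ∀ i ∈ cellIdx N, ∀ k ∈ cellIdx N, v i 0 k = 0 ∧ v i N k = 0) :
    ipFY N h (fun a b c => -lapFY N h u a b c) v =
      h ^ 3 / h ^ 2 * faceDirichletFormX N (yFaceToX u) (yFaceToX v) := by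
  rw [ipFY_eq_ipFX, yFaceToX_neg_lapFY]
  exact ipFX_neg_lapFX _ _ hv

theorem ipFZ_neg_lapFZ (u v : ℤ → ℤ → ℤ → ℝ)
    (hv : ∀ i ∈ cellIdx N, ∀ j ∈ cellIdx N, v i j 0 = 0 ∧ v i j N = 0) :
    ipFZ N h (fun a b c => -lapFZ N h u a b c) v =
      h ^ 3 / h ^ 2 * faceDirichletFormX N (zFaceToX u) (zFaceToX v) := by
  rw [ipFZ_eq_ipFX, zFaceToX_neg_lapFZ]
  exact ipFX_neg_lapFX _ _ hv

end Components

def macDirichletForm (N : ℕ) (ux uy uz vx vy vz : ℤ → ℤ → ℤ → ℝ) : ℝ :=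
  faceDirichletFormX N ux vx + faceDirichletFormX N (yFaceToX uy) (yFaceToX vy) +
    faceDirichletFormX N (zFaceToX uz) (zFaceToX vz)

section MAC

variable {N : ℕ} {h : ℝ} {ux uy uz vx vy vz : ℤ → ℤ → ℤ → ℝ}

theorem macIP_comm : macIP N h ux uy uz vx vy vz = macIP N h vx vy vz ux uy uz := by
  simp only [macIP, ipFX, ipFY, ipFZ, mul_comm (ux _ _ _), mul_comm (uy _ _ _),
    mul_comm (uz _ _ _)]

theorem macDirichletForm_comm :
    macDirichletForm N ux uy uz vx vy vz = macDirichletForm N vx vy vz ux uy uz := by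
  rw [macDirichletForm, macDirichletForm, faceDirichletFormX_comm ux,
    faceDirichletFormX_comm (yFaceToX uy), faceDirichletFormX_comm (zFaceToX uz)]

theorem macDirichletForm_self_nonneg : 0 ≤ macDirichletForm N ux uy uz ux uy uz :=
  add_nonneg (add_nonneg (faceDirichletFormX_self_nonneg _) (faceDirichletFormX_self_nonneg _))
    (faceDirichletFormX_self_nonneg _)

theorem macIP_neg_lap (hv : NoPen N vx vy vz) :
    macIP N h (fun a b c => -lapFX N h ux a b c) (fun a b c => -lapFY N h uy a b c)
        (fun a b c => -lapFZ N h uz a b c) vx vy vz =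
      h ^ 3 / h ^ 2 * macDirichletForm N ux uy uz vx vy vz := by
  rw [macIP, ipFX_neg_lapFX _ _ hv.1, ipFY_neg_lapFY _ _ hv.2.1, ipFZ_neg_lapFZ _ _ hv.2.2,
    macDirichletForm]
  ring

end MAC

theorem mac_laplacian_symmetric_nonneg_general (L : ℝ) (hL : 0 < L) (N : ℕ)
    (ux uy uz vx vy vz : ℤ → ℤ → ℤ → ℝ)
    (hu : NoPen N ux uy uz) (hv : NoPen N vx vy vz) :
    macIP N (L / N) (fun a b c => -lapFX N (L / N) ux a b c)
        (fun a b c => -lapFY N (L / N) uy a b c)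
        (fun a b c => -lapFZ N (L / N) uz a b c) vx vy vz =
      macIP N (L / N) ux uy uz (fun a b c => -lapFX N (L / N) vx a b c)
        (fun a b c => -lapFY N (L / N) vy a b c)
        (fun a b c => -lapFZ N (L / N) vz a b c) ∧
    0 ≤ macIP N (L / N) (fun a b c => -lapFX N (L / N) ux a b c)
        (fun a b c => -lapFY N (L / N) uy a b c)
        (fun a b c => -lapFZ N (L / N) uz a b c) ux uy uz := by
  have hh : 0 ≤ L / N := by positivity
  refine ⟨?_, ?_⟩
  · rw [macIP_comm (ux := ux), macIP_neg_lap hv, macIP_neg_lap hu, macDirichletForm_comm]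
  · rw [macIP_neg_lap hu]
    exact mul_nonneg (by positivity) macDirichletForm_self_nonneg

/-- symmetry and negative semidefiniteness of the
face-centered MAC Laplacian: for MAC fields `u, v` satisfying the
no-penetration and free-slip boundary conditions,
`(-Δ_h u, v) = (u, -Δ_h v)` and `(-Δ_h u, u) ≥ 0`. -/
theorem mac_laplacian_symmetric_nonneg (L : ℝ) (hL : 0 < L) (N : ℕ) (hN : 0 < N)
    (ux uy uz vx vy vz : ℤ → ℤ → ℤ → ℝ)
    (hu : NoPen N ux uy uz) (hv : NoPen N vx vy vz) :
    macIP N (L / N) (fun a b c => -lapFX N (L / N) ux a b c)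
        (fun a b c => -lapFY N (L / N) uy a b c)
        (fun a b c => -lapFZ N (L / N) uz a b c) vx vy vz =
      macIP N (L / N) ux uy uz (fun a b c => -lapFX N (L / N) vx a b c)
        (fun a b c => -lapFY N (L / N) vy a b c)
        (fun a b c => -lapFZ N (L / N) vz a b c) ∧
    0 ≤ macIP N (L / N) (fun a b c => -lapFX N (L / N) ux a b c)
        (fun a b c => -lapFY N (L / N) uy a b c)
        (fun a b c => -lapFZ N (L / N) uz a b c) ux uy uz :=
  mac_laplacian_symmetric_nonneg_general L hL N ux uy uz vx vy vz hu hv
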